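/- Let G₁ and G₂ be finite simple graphs of orders n₁, n₂ and sizes m₁, m₂ with minimum degrees δ₁, δ₂. Then ESO(G₁ ∘ G₂) ≥ 2√2·m₁·(δ₁+n₂)² + 2√2·n₁·m₂·(δ₂+1)² + n₁n₂·(δ₁+n₂+δ₂+1)·√((δ₁+n₂)² + (δ₂+1)²). -/

import Mathlib

open Finset SimpleGraph
open scoped Classical

noncomputable def ESO {V : Type*} [Fintype V] (G : SimpleGraph V) : Real :=
  Finset.sum G.edgeSet.toFinset fun e =>
    Sym2.lift ⟨fun u v => ((G.degree u : Real) + (G.degree v : Real)) *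
        Real.sqrt ((G.degree u : Real) ^ 2 + (G.degree v : Real) ^ 2),
      fun u v => by
        dsimp only; rw [add_comm (G.degree u : Real), add_comm ((G.degree u : Real) ^ 2)]⟩ e

noncomputable def EU {V : Type*} [Fintype V] (G : SimpleGraph V) : Real :=
  Finset.sum G.edgeSet.toFinset fun e =>
    Sym2.lift ⟨fun u v => Real.sqrt ((G.degree u : Real) ^ 2 + (G.degree v : Real) ^ 2 +
        (G.degree u : Real) * (G.degree v : Real)),
      fun u v => by
        dsimp only; rw [mul_comm (G.degree u : Real), add_comm ((G.degree u : Real) ^ 2)]⟩ e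

noncomputable def edgeCount {V : Type*} [Fintype V] (G : SimpleGraph V) : Nat :=
  G.edgeSet.toFinset.card

def corona {V1 V2 : Type*} (G1 : SimpleGraph V1) (G2 : SimpleGraph V2) :
    SimpleGraph (V1 ⊕ V1 × V2) where
  Adj x y :=
    match x, y with
    | Sum.inl a, Sum.inl b => G1.Adj a b
    | Sum.inr p, Sum.inr q => p.1 = q.1 ∧ G2.Adj p.2 q.2
    | Sum.inl a, Sum.inr p => a = p.1
    | Sum.inr p, Sum.inl a => a = p.1
  symm := by
    constructor
    rintro (a | p) (b | q) h
    · exact G1.adj_symm h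
    · exact h
    · exact h
    · exact ⟨h.1.symm, G2.adj_symm h.2⟩
  loopless := by
    constructor
    rintro (a | p) h
    · exact G1.irrefl h
    · exact G2.irrefl h.2

/-! In the corona, a vertex `a` of `G₁` has degree `d₁(a) + n₂ ≥ δ₁ + n₂` and a vertex `(a, v)` of
the `a`-th copy of `G₂` has degree `d₂(v) + 1 ≥ δ₂ + 1`. The edge weight `(x + y)√(x² + y²)` is
monotone in both arguments, so ESO is at least the weight sum with every degree replaced by this
lower bound. That sum is computed exactly by summing over ordered adjacent pairs (twice the edge
sum), since each neighbourhood in the corona splits into a `G₁`- or `G₂`-neighbourhood plus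
spokes; it counts `m₁` edges of `G₁`, `n₁ m₂` edges in the copies and `n₁ n₂` spokes. -/

namespace SimpleGraph

variable {V : Type*} [Fintype V] (G : SimpleGraph V) {M : Type*} [AddCommMonoid M]

theorem sum_darts_eq_sum_sum_neighborFinset (g : V → V → M) :
    ∑ d : G.Dart, g d.fst d.snd = ∑ u, ∑ v ∈ G.neighborFinset u, g u v := by
  rw [sum_sigma']
  exact sum_bij' (fun d _ => ⟨d.fst, d.snd⟩) (fun x hx => ⟨(x.1, x.2), by simpa using hx⟩)
    (by simp) (by simp) (by simp) (by simp) (by simp)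

theorem sum_sum_neighborFinset_eq_two_nsmul (g : V → V → M) (hg : ∀ u v, g u v = g v u) :
    ∑ u, ∑ v ∈ G.neighborFinset u, g u v = 2 • ∑ e ∈ G.edgeFinset, Sym2.lift ⟨g, hg⟩ e := by
  rw [← sum_darts_eq_sum_sum_neighborFinset, smul_sum,
    ← sum_fiberwise_of_maps_to (g := Dart.edge) fun d _ => mem_edgeFinset.2 d.edge_mem]
  refine sum_congr rfl fun e he => ?_
  induction e using Sym2.ind with
  | _ v w =>
    let d : G.Dart := ⟨(v, w), mem_edgeFinset.1 he⟩
    rw [show s(v, w) = d.edge from rfl, Dart.edge_fiber, sum_pair d.symm_ne.symm, two_nsmul]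
    exact congrArg₂ (· + ·) rfl (hg w v)

end SimpleGraph

theorem sum_degree_eq_two_mul_edgeCount {V : Type*} [Fintype V] (G : SimpleGraph V) :
    ∑ v, (G.degree v : ℝ) = 2 * edgeCount G := by
  exact_mod_cast G.sum_degrees_eq_twice_card_edges

noncomputable def esoWeight (x y : ℝ) : ℝ := (x + y) * √(x ^ 2 + y ^ 2)

theorem esoWeight_comm (x y : ℝ) : esoWeight x y = esoWeight y x := by
  rw [esoWeight, esoWeight, add_comm x, add_comm (x ^ 2)]

theorem esoWeight_self {c : ℝ} (hc : 0 ≤ c) : esoWeight c c = 2 * √2 * c ^ 2 := by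
  rw [esoWeight, ← two_mul (c ^ 2), Real.sqrt_mul zero_le_two, Real.sqrt_sq hc]
  ring

theorem esoWeight_le_esoWeight {a b x y : ℝ} (ha : 0 ≤ a) (hb : 0 ≤ b) (hx : a ≤ x) (hy : b ≤ y) :
    esoWeight a b ≤ esoWeight x y := by
  unfold esoWeight
  gcongr
  exact add_nonneg (ha.trans hx) (hb.trans hy)

theorem two_mul_ESO {V : Type*} [Fintype V] (G : SimpleGraph V) :
    2 * ESO G = ∑ u, ∑ v ∈ G.neighborFinset u, esoWeight (G.degree u) (G.degree v) := by
  rw [G.sum_sum_neighborFinset_eq_two_nsmul _ fun u v => esoWeight_comm _ _, nsmul_eq_mul]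
  rfl

section Corona

variable {V1 V2 : Type*} (G1 : SimpleGraph V1) (G2 : SimpleGraph V2)

@[simp] theorem corona_adj_inl_inl {a b : V1} :
    (corona G1 G2).Adj (.inl a) (.inl b) ↔ G1.Adj a b := .rfl
@[simp] theorem corona_adj_inr_inr {p q : V1 × V2} :
    (corona G1 G2).Adj (.inr p) (.inr q) ↔ p.1 = q.1 ∧ G2.Adj p.2 q.2 := .rfl
@[simp] theorem corona_adj_inl_inr {a : V1} {p : V1 × V2} :
    (corona G1 G2).Adj (.inl a) (.inr p) ↔ a = p.1 := .rfl
@[simp] theorem corona_adj_inr_inl {a : V1} {p : V1 × V2} :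
    (corona G1 G2).Adj (.inr p) (.inl a) ↔ a = p.1 := .rfl

variable [Fintype V1] [Fintype V2] {M : Type*} [AddCommMonoid M]

theorem sum_neighborFinset_corona_inl (h : V1 ⊕ V1 × V2 → M) (a : V1) :
    ∑ y ∈ (corona G1 G2).neighborFinset (.inl a), h y =
      ∑ b ∈ G1.neighborFinset a, h (.inl b) + ∑ v, h (.inr (a, v)) := by
  rw [neighborFinset_eq_filter, sum_filter, Fintype.sum_sum_type, Fintype.sum_prod_type,
    neighborFinset_eq_filter, sum_filter]
  simp

theorem sum_neighborFinset_corona_inr (h : V1 ⊕ V1 × V2 → M) (p : V1 × V2) :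
    ∑ y ∈ (corona G1 G2).neighborFinset (.inr p), h y =
      ∑ w ∈ G2.neighborFinset p.2, h (.inr (p.1, w)) + h (.inl p.1) := by
  rw [neighborFinset_eq_filter, sum_filter, Fintype.sum_sum_type, Fintype.sum_prod_type,
    neighborFinset_eq_filter, sum_filter, add_comm]
  simp [ite_and]

theorem degree_corona_inl (a : V1) :
    (corona G1 G2).degree (.inl a) = G1.degree a + Fintype.card V2 := by
  rw [← card_neighborFinset_eq_degree, card_eq_sum_ones, sum_neighborFinset_corona_inl]
  simp

theorem degree_corona_inr (p : V1 × V2) :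
    (corona G1 G2).degree (.inr p) = G2.degree p.2 + 1 := by
  rw [← card_neighborFinset_eq_degree, card_eq_sum_ones, sum_neighborFinset_corona_inr]
  simp

theorem minDegree_le_degree_corona (x : V1 ⊕ V1 × V2) :
    Sum.elim (fun _ => (G1.minDegree : ℝ) + Fintype.card V2) (fun _ => (G2.minDegree : ℝ) + 1) x ≤
      (corona G1 G2).degree x := by
  rcases x with a | p
  · rw [Sum.elim_inl, degree_corona_inl, Nat.cast_add]
    gcongr
    exact G1.minDegree_le_degree a
  · rw [Sum.elim_inr, degree_corona_inr, Nat.cast_succ]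
    gcongr
    exact G2.minDegree_le_degree p.2

theorem sum_sum_neighborFinset_corona_esoWeight (c1 c2 : ℝ) :
    ∑ x, ∑ y ∈ (corona G1 G2).neighborFinset x,
      esoWeight (Sum.elim (fun _ => c1) (fun _ => c2) x) (Sum.elim (fun _ => c1) (fun _ => c2) y) =
    2 * (edgeCount G1 * esoWeight c1 c1 + Fintype.card V1 * edgeCount G2 * esoWeight c2 c2 +
      Fintype.card V1 * Fintype.card V2 * esoWeight c1 c2) := by
  simp only [Fintype.sum_sum_type, sum_neighborFinset_corona_inl, sum_neighborFinset_corona_inr,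
    Sum.elim_inl, Sum.elim_inr, sum_const, card_neighborFinset_eq_degree, card_univ, nsmul_eq_mul,
    sum_add_distrib, ← sum_mul, Fintype.sum_prod_type, sum_degree_eq_two_mul_edgeCount,
    Fintype.card_prod, Nat.cast_mul, esoWeight_comm c2 c1]
  ring

end Corona

theorem eso_corona_lower {V1 V2 : Type*} [Fintype V1] [Fintype V2]
    (G1 : SimpleGraph V1) (G2 : SimpleGraph V2) :
    2 * Real.sqrt 2 * (edgeCount G1 : Real) * ((G1.minDegree : Real) + Fintype.card V2) ^ 2 +
      2 * Real.sqrt 2 * (Fintype.card V1 : Real) * (edgeCount G2 : Real) *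
        ((G2.minDegree : Real) + 1) ^ 2 +
      (Fintype.card V1 : Real) * (Fintype.card V2 : Real) *
        ((G1.minDegree : Real) + Fintype.card V2 + (G2.minDegree : Real) + 1) *
        Real.sqrt (((G1.minDegree : Real) + Fintype.card V2) ^ 2 +
          ((G2.minDegree : Real) + 1) ^ 2) ≤ ESO (corona G1 G2) := by
  set c1 : ℝ := G1.minDegree + Fintype.card V2
  set c2 : ℝ := G2.minDegree + 1 with hc2_def
  have hc1 : 0 ≤ c1 := by positivity
  have hc2 : 0 ≤ c2 := by positivity
  set κ : V1 ⊕ V1 × V2 → ℝ := Sum.elim (fun _ => c1) (fun _ => c2)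
  have hκ : ∀ x, 0 ≤ κ x := by rintro (_ | _) <;> assumption
  have hbound : ∑ x, ∑ y ∈ (corona G1 G2).neighborFinset x, esoWeight (κ x) (κ y) ≤
      2 * ESO (corona G1 G2) := by
    rw [two_mul_ESO]
    gcongr with x _ y _
    exact esoWeight_le_esoWeight (hκ x) (hκ y) (minDegree_le_degree_corona G1 G2 x)
      (minDegree_le_degree_corona G1 G2 y)
  rw [sum_sum_neighborFinset_corona_esoWeight, esoWeight_self hc1, esoWeight_self hc2,
    esoWeight] at hbound
  rw [add_assoc c1, ← hc2_def]
  linarith
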